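/- arXiv:2409.15445 — 4 statements merged into one kernel-verified Lean document; each statement's English description precedes it below -/
import Mathlib

section
/- Let F be a quadratically closed field of characteristic 0. Then there exists a subfield K of F together with a ring embedding K → ℝ such that K admits a unique quadratic extension up to isomorphism. -/
/-!
Let `M` be a subfield of `F` maximal (Zorn) among those that are algebraic over `ℚ` and in which
`-1` is not a sum of squares. If `s ∈ F \ M` has `s² ∈ M`, then `M(s) = M + M s` is strictly
larger, so `-1 = p + q s² + r s` with `p, q` sums of squares of `M` and `r ∈ M`; as `s ∉ M`,
`r = 0`, and `-s² = (1 + p) q / q²` is a sum of squares. Since every element of `F` is a square,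
for each `a ∈ M` one of `±a` is a square in `M`: `M` is Euclidean. Its squares are the positive
cone of an ordering, archimedean because `M` is algebraic over `ℚ`, so `M` embeds into `ℝ`.
Finally, a quadratic extension of `M` is `M(√d)` for a non-square `d`; then `-d` is a square, so
the extension contains a square root of `-1` and is `M[X]/(X² + 1)`.
-/

open Polynomial Module

open Finset in
theorem Polynomial.IsRoot.le_max_one_sum_abs_coeff {R : Type*} [Field R] [LinearOrder R]
    [IsStrictOrderedRing R] {p : R[X]} {x : R} (hx : p.IsRoot x) (hp : p.Monic) :
    x ≤ max 1 (∑ i ∈ range p.natDegree, |p.coeff i|) := by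
  by_contra! hlt
  obtain ⟨hx1, hxS⟩ := max_lt_iff.1 hlt
  obtain ⟨m, hm⟩ : ∃ m, p.natDegree = m + 1 :=
    Nat.exists_eq_succ_of_ne_zero fun h => by
      simp [hp.natDegree_eq_zero.1 h] at hx
  have hroot : x ^ (m + 1) = -∑ i ∈ range (m + 1), p.coeff i * x ^ i := by
    rw [IsRoot.def, eval_eq_sum_range, hm, sum_range_succ, ← hm, hp.coeff_natDegree, one_mul,
      hm] at hx
    linear_combination hx
  have hxpos : 0 < x := zero_lt_one.trans hx1
  rw [hm] at hxS
  have : x ^ (m + 1) < x ^ (m + 1) := calc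
    x ^ (m + 1) = -∑ i ∈ range (m + 1), p.coeff i * x ^ i := hroot
    _ ≤ ∑ i ∈ range (m + 1), |p.coeff i| * x ^ i := by
      rw [← sum_neg_distrib]
      gcongr with i
      calc -(p.coeff i * x ^ i) ≤ |p.coeff i * x ^ i| := neg_le_abs _
        _ = |p.coeff i| * x ^ i := by rw [abs_mul, abs_of_pos (pow_pos hxpos i)]
    _ ≤ ∑ i ∈ range (m + 1), |p.coeff i| * x ^ m := by
      gcongr with i hi
      · exact hx1.le
      · exact Nat.lt_succ_iff.1 (mem_range.1 hi)
    _ = (∑ i ∈ range (m + 1), |p.coeff i|) * x ^ m := (sum_mul _ _ _).symm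
    _ < x * x ^ m := by gcongr
    _ = x ^ (m + 1) := (pow_succ' x m).symm
  exact lt_irrefl _ this

theorem archimedean_of_isAlgebraic_rat (R : Type*) [Field R] [LinearOrder R]
    [IsStrictOrderedRing R] [Algebra.IsAlgebraic ℚ R] : Archimedean R := by
  refine archimedean_iff_rat_le.2 fun x => ?_
  have hx : IsIntegral ℚ x := Algebra.IsIntegral.isIntegral x
  set p := minpoly ℚ x
  refine ⟨max 1 (∑ i ∈ Finset.range p.natDegree, |p.coeff i|), ?_⟩
  have hroot : (p.map (algebraMap ℚ R)).IsRoot x := by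
    simp [IsRoot.def, eval_map_algebraMap, p, minpoly.aeval]
  simpa [natDegree_map] using hroot.le_max_one_sum_abs_coeff ((minpoly.monic hx).map _)

theorem IsSemireal.eq_zero_of_isSumSq_of_isSumSq_neg {K : Type*} [Field K] [IsSemireal K]
    {s : K} (hs : IsSumSq s) (hs' : IsSumSq (-s)) : s = 0 := by
  by_contra h
  apply IsSemireal.not_isSumSq_neg_one K
  have : (-1 : K) = -s * (s * (s⁻¹ * s⁻¹)) := by field_simp
  rw [this]
  exact hs'.mul (hs.mul (IsSumSq.mul_self _))

theorem exists_mul_self_eq_algebraMap_of_finrank_eq_two {K L : Type*} [Field K]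
    [NeZero (2 : K)] [Field L] [Algebra K L] (h : finrank K L = 2) :
    ∃ (y : L) (d : K), ¬ IsSquare d ∧ y * y = algebraMap K L d := by
  have : FiniteDimensional K L := Module.finite_of_finrank_eq_succ h
  obtain ⟨x, hx⟩ : ∃ x : L, x ∉ (algebraMap K L).range := by
    by_contra! hall
    have := Algebra.finrank_eq_one_iff_bijective_algebraMap.2
      ⟨(algebraMap K L).injective, fun y => hall y⟩
    omega
  have hdeg : (minpoly K x).natDegree = 2 := le_antisymm (h ▸ minpoly.natDegree_le x)
    ((minpoly.two_le_natDegree_iff (IsIntegral.of_finite K x)).2 hx)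
  set b := (minpoly K x).coeff 1
  set c := (minpoly K x).coeff 0
  have hx2 : x * x + algebraMap K L b * x + algebraMap K L c = 0 := by
    have hmonic : (minpoly K x).coeff 2 = 1 :=
      hdeg ▸ (minpoly.monic (IsIntegral.of_finite K x)).coeff_natDegree
    have := minpoly.aeval K x
    rw [aeval_eq_sum_range, hdeg] at this
    simp only [Finset.sum_range_succ, Finset.sum_range_zero, hmonic, Algebra.smul_def,
      map_one] at this
    linear_combination this
  have h2 : (2 : L) ≠ 0 := by
    have := (algebraMap K L).injective.ne (two_ne_zero (α := K))
    rwa [map_ofNat, map_zero] at this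
  refine ⟨2 * x + algebraMap K L b, discrim 1 b c, fun ⟨e, he⟩ => hx ?_, ?_⟩
  · have hE := congrArg (algebraMap K L) he
    simp only [discrim, map_sub, map_mul, map_pow, map_ofNat, map_one] at hE
    have hy : (2 * x + algebraMap K L b - algebraMap K L e) *
        (2 * x + algebraMap K L b + algebraMap K L e) = 0 := by
      linear_combination 4 * hx2 + hE
    rcases mul_eq_zero.1 hy with hy | hy
    · refine ⟨(e - b) / 2, ?_⟩
      rw [map_div₀, map_sub, map_ofNat]
      field_simp
      linear_combination -hy
    · refine ⟨(-e - b) / 2, ?_⟩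
      rw [map_div₀, map_sub, map_neg, map_ofNat]
      field_simp
      linear_combination -hy
  · simp only [discrim, map_sub, map_mul, map_pow, map_ofNat, map_one]
    linear_combination 4 * hx2

theorem finrank_adjoinRoot_X_sq_add_one {K : Type*} [Field K] :
    finrank K (AdjoinRoot (X ^ 2 + 1 : K[X])) = 2 := by
  have hC : (X ^ 2 + 1 : K[X]) = X ^ 2 + C 1 := by rw [map_one]
  have hne : (X ^ 2 + 1 : K[X]) ≠ 0 := hC ▸ X_pow_add_C_ne_zero two_pos 1
  rw [(AdjoinRoot.powerBasis hne).finrank, AdjoinRoot.powerBasis_dim, hC, natDegree_X_pow_add_C]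

class IsEuclideanField (K : Type*) [Field K] : Prop extends IsSemireal K where
  isSquare_or_isSquare_neg (x : K) : IsSquare x ∨ IsSquare (-x)

namespace IsEuclideanField

variable {K : Type*} [Field K] [IsEuclideanField K]

theorem not_isSquare_neg_one : ¬ IsSquare (-1 : K) :=
  fun h => IsSemireal.not_isSumSq_neg_one K h.isSumSq

theorem isSquare_add {a b : K} (ha : IsSquare a) (hb : IsSquare b) : IsSquare (a + b) := by
  rcases isSquare_or_isSquare_neg (a + b) with h | hneg
  · exact h
  · rw [IsSemireal.eq_zero_of_isSumSq_of_isSumSq_neg (ha.isSumSq.add hb.isSumSq) hneg.isSumSq]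
    exact IsSquare.zero

variable (K) in
def squareCone : RingCone K where
  carrier := {x | IsSquare x}
  zero_mem' := IsSquare.zero
  one_mem' := IsSquare.one
  add_mem' := isSquare_add
  mul_mem' := IsSquare.mul
  eq_zero_of_mem_of_neg_mem' ha hna :=
    IsSemireal.eq_zero_of_isSumSq_of_isSumSq_neg ha.isSumSq hna.isSumSq

instance : HasMemOrNegMem (squareCone K) := ⟨isSquare_or_isSquare_neg⟩

theorem nonempty_ringHom_real [Algebra.IsAlgebraic ℚ K] : Nonempty (K →+* ℝ) := by
  classical
  let := LinearOrder.mkOfAddGroupCone (squareCone K)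
  have := IsOrderedRing.mkOfCone (squareCone K)
  have := IsOrderedRing.toIsStrictOrderedRing K
  have := archimedean_of_isAlgebraic_rat K
  exact ⟨(ConditionallyCompleteLinearOrderedField.inducedOrderRingHom K ℝ).toRingHom⟩

instance : Fact (Irreducible (X ^ 2 + 1 : K[X])) := by
  have := (X_pow_sub_C_irreducible_iff_of_prime Nat.prime_two (a := (-1 : K))).2
    fun b hb => not_isSquare_neg_one ⟨b, by rw [← hb, sq]⟩
  exact ⟨by simpa using this⟩

theorem exists_mul_self_eq_neg_one_of_finrank_eq_two {L : Type*} [Field L] [Algebra K L]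
    (h : finrank K L = 2) : ∃ j : L, j * j = -1 := by
  obtain ⟨y, d, hd, hy⟩ := exists_mul_self_eq_algebraMap_of_finrank_eq_two h
  obtain ⟨e, he⟩ := (isSquare_or_isSquare_neg d).resolve_left hd
  have hd0 : algebraMap K L d ≠ 0 := by
    rw [_root_.map_ne_zero]; rintro rfl; exact hd IsSquare.zero
  refine ⟨y / algebraMap K L e, ?_⟩
  have hE : algebraMap K L e * algebraMap K L e = -algebraMap K L d := by
    rw [← map_mul, ← he, map_neg]
  rw [div_mul_div_comm, hy, hE, div_neg, div_self hd0]

theorem nonempty_algEquiv_adjoinRoot_of_finrank_eq_two {L : Type*} [Field L] [Algebra K L]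
    (h : finrank K L = 2) : Nonempty (AdjoinRoot (X ^ 2 + 1 : K[X]) ≃ₐ[K] L) := by
  obtain ⟨j, hj⟩ := exists_mul_self_eq_neg_one_of_finrank_eq_two h
  let φ := AdjoinRoot.liftAlgHom (X ^ 2 + 1 : K[X]) (Algebra.ofId K L) j (by simp [sq, hj])
  have : FiniteDimensional K L := Module.finite_of_finrank_eq_succ h
  have : FiniteDimensional K (AdjoinRoot (X ^ 2 + 1 : K[X])) :=
    Module.finite_of_finrank_eq_succ finrank_adjoinRoot_X_sq_add_one
  have hsurj := (LinearMap.injective_iff_surjective_of_finrank_eq_finrank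
      (f := φ.toLinearMap) (by rw [finrank_adjoinRoot_X_sq_add_one, h])).1 φ.toRingHom.injective
  exact ⟨AlgEquiv.ofBijective φ ⟨φ.toRingHom.injective, hsurj⟩⟩

end IsEuclideanField

namespace Subfield

variable {F : Type*} [Field F]

def sumSq (K : Subfield F) : Subsemiring F := (Subsemiring.sumSq K).map K.subtype

variable {K : Subfield F}

theorem coe_mem_sumSq_iff {a : K} : (a : F) ∈ K.sumSq ↔ IsSumSq a := by
  simp [sumSq]

theorem isSemireal_iff_neg_one_notMem_sumSq : IsSemireal K ↔ (-1 : F) ∉ K.sumSq := by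
  rw [isSemireal_iff_not_isSumSq_neg_one, ← coe_mem_sumSq_iff, coe_neg, coe_one]

theorem mem_of_mem_sumSq {x : F} (hx : x ∈ K.sumSq) : x ∈ K := by
  obtain ⟨y, -, rfl⟩ := hx
  exact y.2

theorem mul_self_mem_sumSq {x : F} (hx : x ∈ K) : x * x ∈ K.sumSq :=
  coe_mem_sumSq_iff.2 (IsSumSq.mul_self (⟨x, hx⟩ : K))

theorem sumSq_le_of_mul_self_mem {T : Subsemiring F} (h : ∀ x ∈ K, x * x ∈ T) :
    K.sumSq ≤ T := by
  rintro _ ⟨y, hy, rfl⟩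
  induction (Subsemiring.mem_sumSq.1 hy) with
  | zero => exact zero_mem T
  | sq_add a _ ih => exact add_mem (h a a.2) (ih (Subsemiring.mem_sumSq.2 ‹_›))

theorem sumSq_mono : Monotone (sumSq : Subfield F → Subsemiring F) :=
  fun _ _ hKL => sumSq_le_of_mul_self_mem fun _ hx => mul_self_mem_sumSq (hKL hx)

def adjoinSqrt (K : Subfield F) {s : F} (hs : s * s ∈ K) : Subfield F where
  carrier := {z | ∃ x ∈ K, ∃ y ∈ K, z = x + y * s}
  zero_mem' := ⟨0, K.zero_mem, 0, K.zero_mem, by ring⟩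
  one_mem' := ⟨1, K.one_mem, 0, K.zero_mem, by ring⟩
  add_mem' := by
    rintro _ _ ⟨x, hx, y, hy, rfl⟩ ⟨u, hu, v, hv, rfl⟩
    exact ⟨x + u, add_mem hx hu, y + v, add_mem hy hv, by ring⟩
  neg_mem' := by
    rintro _ ⟨x, hx, y, hy, rfl⟩
    exact ⟨-x, neg_mem hx, -y, neg_mem hy, by ring⟩
  mul_mem' := by
    rintro _ _ ⟨x, hx, y, hy, rfl⟩ ⟨u, hu, v, hv, rfl⟩
    exact ⟨x * u + y * v * (s * s), add_mem (mul_mem hx hu) (mul_mem (mul_mem hy hv) hs),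
      x * v + y * u, add_mem (mul_mem hx hv) (mul_mem hy hu), by ring⟩
  inv_mem' := by
    rintro _ ⟨x, hx, y, hy, rfl⟩
    by_cases hconj : x - y * s = 0
    · refine ⟨(2 * x)⁻¹, inv_mem (mul_mem (ofNat_mem K 2) hx), 0, K.zero_mem, ?_⟩
      rw [zero_mul, add_zero]
      congr 1
      linear_combination -hconj
    · have hD : x * x - y * y * (s * s) ∈ K :=
        sub_mem (mul_mem hx hx) (mul_mem (mul_mem hy hy) hs)
      refine ⟨x * (x * x - y * y * (s * s))⁻¹, mul_mem hx (inv_mem hD),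
        -y * (x * x - y * y * (s * s))⁻¹, mul_mem (neg_mem hy) (inv_mem hD), ?_⟩
      calc (x + y * s)⁻¹ = (x - y * s) * ((x - y * s)⁻¹ * (x + y * s)⁻¹) :=
            (mul_inv_cancel_left₀ hconj _).symm
        _ = (x - y * s) * ((x - y * s) * (x + y * s))⁻¹ := by rw [mul_inv]
        _ = _ := by rw [show (x - y * s) * (x + y * s) = x * x - y * y * (s * s) by ring]; ring

variable {s : F} (hs : s * s ∈ K)

theorem le_adjoinSqrt : K ≤ K.adjoinSqrt hs :=
  fun x hx => ⟨x, hx, 0, K.zero_mem, by ring⟩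

theorem self_mem_adjoinSqrt : s ∈ K.adjoinSqrt hs :=
  ⟨0, K.zero_mem, 1, K.one_mem, by ring⟩

theorem exists_eq_of_mem_sumSq_adjoinSqrt {w : F} (hw : w ∈ (K.adjoinSqrt hs).sumSq) :
    ∃ p ∈ K.sumSq, ∃ q ∈ K.sumSq, ∃ r ∈ K, w = p + q * (s * s) + r * s := by
  obtain ⟨w, hw, rfl⟩ := hw
  induction (Subsemiring.mem_sumSq.1 hw) with
  | zero => exact ⟨0, zero_mem _, 0, zero_mem _, 0, K.zero_mem, by simp⟩
  | sq_add a hrest ih =>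
    obtain ⟨p, hp, q, hq, r, hr, hrest⟩ := ih (Subsemiring.mem_sumSq.2 hrest)
    obtain ⟨x, hx, y, hy, hxy⟩ := a.2
    refine ⟨x * x + p, add_mem (mul_self_mem_sumSq hx) hp, y * y + q,
      add_mem (mul_self_mem_sumSq hy) hq, 2 * x * y + r,
      add_mem (mul_mem (mul_mem (ofNat_mem K 2) hx) hy) hr, ?_⟩
    simp only [map_add, map_mul, coe_subtype, hxy, hrest]
    ring

theorem neg_mul_self_mem_sumSq_of_not_isSemireal_adjoinSqrt [IsSemireal K] (hsK : s ∉ K)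
    (hadj : ¬ IsSemireal (K.adjoinSqrt hs)) : -(s * s) ∈ K.sumSq := by
  have hK := isSemireal_iff_neg_one_notMem_sumSq.1 ‹IsSemireal K›
  rw [isSemireal_iff_neg_one_notMem_sumSq, not_not] at hadj
  obtain ⟨p, hp, q, hq, r, hr, hpqr⟩ := exists_eq_of_mem_sumSq_adjoinSqrt hs hadj
  have hr0 : r = 0 := by
    by_contra hr0
    refine hsK ?_
    have : s = r⁻¹ * (-1 - p - q * (s * s)) := by field_simp; linear_combination -hpqr
    rw [this]
    exact mul_mem (inv_mem hr) (sub_mem (sub_mem (neg_mem K.one_mem) (mem_of_mem_sumSq hp))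
      (mul_mem (mem_of_mem_sumSq hq) hs))
  have hq0 : q ≠ 0 := by
    rintro rfl
    exact hK (by rw [hpqr, hr0]; simpa using hp)
  have : -(s * s) = (1 + p) * q * (q⁻¹ * q⁻¹) := by
    subst hr0
    field_simp
    linear_combination hpqr
  rw [this]
  exact mul_mem (mul_mem (add_mem (one_mem _) hp) hq)
    (mul_self_mem_sumSq (inv_mem (mem_of_mem_sumSq hq)))

end Subfield

section MaximalSemirealSubfield

variable (F : Type*) [Field F] [CharZero F]

def semirealAlgebraicSubfields : Set (Subfield F) :=
  {K | (∀ x ∈ K, IsAlgebraic ℚ x) ∧ IsSemireal K}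

open Subfield

theorem ratCast_fieldRange_mem_semirealAlgebraicSubfields :
    (Rat.castHom F).fieldRange ∈ semirealAlgebraicSubfields F := by
  refine ⟨?_, isSemireal_iff_neg_one_notMem_sumSq.2 fun h => ?_⟩
  · rintro _ ⟨q, rfl⟩
    simpa using isAlgebraic_algebraMap (A := F) q
  · obtain ⟨q, hq, hq1⟩ := sumSq_le_of_mul_self_mem
      (T := (Subsemiring.sumSq ℚ).map (Rat.castHom F))
      (by rintro _ ⟨q, rfl⟩; exact ⟨q * q, by simp, by simp⟩) h
    rw [show q = -1 from Rat.cast_injective (by simpa using hq1)] at hq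
    exact IsSemireal.not_isSumSq_neg_one ℚ (Subsemiring.mem_sumSq.1 hq)

theorem sSup_mem_semirealAlgebraicSubfields {c : Set (Subfield F)}
    (hcS : c ⊆ semirealAlgebraicSubfields F) (hc : IsChain (· ≤ ·) c) (hne : c.Nonempty) :
    sSup c ∈ semirealAlgebraicSubfields F := by
  have hdir := hc.directedOn
  have mem_sSup {x : F} : x ∈ sSup c ↔ ∃ K ∈ c, x ∈ K := mem_sSup_of_directedOn hne hdir
  refine ⟨fun x hx => ?_, isSemireal_iff_neg_one_notMem_sumSq.2 fun h => ?_⟩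
  · obtain ⟨K, hK, hxK⟩ := mem_sSup.1 hx
    exact (hcS hK).1 x hxK
  · have : Nonempty c := hne.to_subtype
    have hle : (sSup c).sumSq ≤ ⨆ K : c, (K : Subfield F).sumSq :=
      sumSq_le_of_mul_self_mem fun x hx => by
        obtain ⟨K, hK, hxK⟩ := mem_sSup.1 hx
        exact le_iSup (fun K : c => (K : Subfield F).sumSq) ⟨K, hK⟩ (mul_self_mem_sumSq hxK)
    obtain ⟨K, hK⟩ := (Subsemiring.mem_iSup_of_directed
      (hdir.directed_val.mono_comp _ fun _ _ h => sumSq_mono h)).1 (hle h)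
    exact isSemireal_iff_neg_one_notMem_sumSq.1 (hcS K.2).2 hK

theorem exists_maximal_semirealAlgebraicSubfield :
    ∃ M, Maximal (· ∈ semirealAlgebraicSubfields F) M := by
  obtain ⟨M, -, hM⟩ := zorn_le_nonempty₀ _
    (fun c hcS hc K hK => ⟨sSup c, sSup_mem_semirealAlgebraicSubfields F hcS hc ⟨K, hK⟩,
      fun _ => le_sSup⟩) _ (ratCast_fieldRange_mem_semirealAlgebraicSubfields F)
  exact ⟨M, hM⟩

variable {F} {M : Subfield F} (hM : Maximal (· ∈ semirealAlgebraicSubfields F) M)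
include hM

theorem neg_mul_self_mem_sumSq_of_maximal {s : F} (hs : s * s ∈ M) (hsM : s ∉ M) :
    -(s * s) ∈ M.sumSq := by
  have := hM.prop.2
  refine neg_mul_self_mem_sumSq_of_not_isSemireal_adjoinSqrt hs hsM fun hadj => hsM ?_
  have hsalg : IsAlgebraic ℚ s := IsAlgebraic.of_pow two_pos (by rw [sq]; exact hM.prop.1 _ hs)
  have halg : ∀ z ∈ M.adjoinSqrt hs, IsAlgebraic ℚ z := by
    rintro _ ⟨x, hx, y, hy, rfl⟩
    exact (hM.prop.1 x hx).add ((hM.prop.1 y hy).mul hsalg)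
  exact hM.2 ⟨halg, hadj⟩ (le_adjoinSqrt hs) (self_mem_adjoinSqrt hs)

theorem isEuclideanField_of_maximal (hF : ∀ a : F, IsSquare a) : IsEuclideanField M := by
  have := hM.prop.2
  have isSquare_or_isSumSq_neg (a : M) : IsSquare a ∨ IsSumSq (-a) := by
    obtain ⟨s, hs⟩ := hF a
    by_cases hsM : s ∈ M
    · exact .inl ⟨⟨s, hsM⟩, Subtype.ext hs⟩
    · refine .inr (coe_mem_sumSq_iff.1 ?_)
      rw [Subfield.coe_neg, hs]
      exact neg_mul_self_mem_sumSq_of_maximal hM (hs ▸ a.2) hsM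
  refine { isSquare_or_isSquare_neg := fun a => ?_ }
  rcases isSquare_or_isSumSq_neg a with ha | ha
  · exact .inl ha
  rcases isSquare_or_isSumSq_neg (-a) with ha' | ha'
  · exact .inr ha'
  rw [neg_neg] at ha'
  rw [IsSemireal.eq_zero_of_isSumSq_of_isSumSq_neg ha' ha]
  exact .inl IsSquare.zero

theorem isAlgebraic_of_maximal : Algebra.IsAlgebraic ℚ M :=
  ⟨fun x => (isAlgebraic_algHom_iff M.subtype.toRatAlgHom Subtype.val_injective).1
    (hM.prop.1 x x.2)⟩

end MaximalSemirealSubfield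

/-- Let `F` be a quadratically closed field of characteristic `0` (every element
of `F` is a square). Then there exists a subfield `K` of `F` together with a ring embedding
`K → ℝ` such that `K` admits a unique quadratic extension up to isomorphism: there exists a field
extension of `K` of degree `2`, and any two field extensions of `K` of degree `2` are isomorphic
as `K`-algebras. -/
theorem exists_subfield_real_embeddable_with_unique_quadratic_extension
    (F : Type u) [Field F] [CharZero F] (hF : ∀ a : F, IsSquare a) :
    ∃ (K : Subfield F) (_ : (↥K) →+* ℝ),
      (∃ (L : Type u) (_ : Field L) (_ : Algebra (↥K) L), Module.finrank (↥K) L = 2) ∧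
      (∀ (L₁ L₂ : Type u) (_ : Field L₁) (_ : Algebra (↥K) L₁) (_ : Field L₂)
        (_ : Algebra (↥K) L₂), Module.finrank (↥K) L₁ = 2 → Module.finrank (↥K) L₂ = 2 →
        Nonempty (L₁ ≃ₐ[↥K] L₂)) := by
  obtain ⟨M, hM⟩ := exists_maximal_semirealAlgebraicSubfield F
  have := isEuclideanField_of_maximal hM hF
  have := isAlgebraic_of_maximal hM
  obtain ⟨φ⟩ := IsEuclideanField.nonempty_ringHom_real (K := M)
  refine ⟨M, φ, ⟨_, inferInstance, inferInstance, finrank_adjoinRoot_X_sq_add_one⟩,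
    fun L₁ L₂ _ _ _ _ h₁ h₂ => ?_⟩
  obtain ⟨e₁⟩ := IsEuclideanField.nonempty_algEquiv_adjoinRoot_of_finrank_eq_two h₁
  obtain ⟨e₂⟩ := IsEuclideanField.nonempty_algEquiv_adjoinRoot_of_finrank_eq_two h₂
  exact ⟨e₁.symm.trans e₂⟩
end

section
/- Let R be a commutative ring, let m be a positive integer and set n = 2m, and let a, b : Fin n → R satisfy ∑_{i=1}^n a_i b_i = 1. Define the 2 × n matrices A and B over R by: the first row of A is (a_1, a_2, …, a_n) and its second row is (−b_2, b_1, −b_4, b_3, …, −b_n, b_{n−1}); the first row of B is (b_1, b_2, …, b_n) and its second row is (−a_2, a_1, −a_4, a_3, …, −a_n, a_{n−1}). Then A · Bᵀ = I_2, the 2 × 2 identity matrix over R. -/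
lemma sum_range_pair {M : Type*} [AddCommMonoid M] (g : ℕ → M) (m : ℕ) :
    ∑ k ∈ Finset.range (2 * m), g k = ∑ i ∈ Finset.range m, (g (2 * i) + g (2 * i + 1)) := by
  induction m with
  | zero => simp
  | succ n ih =>
    rw [Finset.sum_range_succ, ← ih, show 2 * (n + 1) = 2 * n + 1 + 1 by ring,
      Finset.sum_range_succ, Finset.sum_range_succ, add_assoc]

lemma sum_fin_to_range {M : Type*} [AddCommMonoid M] {n : ℕ} (F : Fin n → M) :
    ∑ k, F k = ∑ k ∈ Finset.range n, if h : k < n then F ⟨k, h⟩ else 0 := by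
  rw [← Fin.sum_univ_eq_sum_range]
  exact Finset.sum_congr rfl fun i _ => by simp

open Matrix in
/-- Let `R` be a commutative ring, `n = 2m` with `m` positive, and
`a b : Fin n → R` with `∑ i, a i * b i = 1`. Let `A` be the `2 × n` matrix whose first row is `a`
and whose second row has, for each `k`, the entry `-b_{2k}` in position `2k-1` and `b_{2k-1}` in
position `2k` (in 0-indexed terms: `-b (j+1)` in even positions `j` and `b (j-1)` in odd
positions `j`), and let `B` be defined likewise with the roles of `a` and `b` exchanged. Then
`A * Bᵀ = 1`. -/
theorem mul_transpose_eq_one_of_section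
    (R : Type u) [CommRing R] (m : ℕ) (hm : 0 < m)
    (a b : Fin (2 * m) → R) (hab : ∑ i, a i * b i = 1) :
    (Matrix.of (fun i (j : Fin (2 * m)) => if i = (0 : Fin 2) then a j
        else if h : (j : ℕ) % 2 = 0 then
          -b ⟨(j : ℕ) + 1, by have := j.isLt; omega⟩
        else
          b ⟨(j : ℕ) - 1, by have := j.isLt; omega⟩)) *
    (Matrix.of (fun i (j : Fin (2 * m)) => if i = (0 : Fin 2) then b j
        else if h : (j : ℕ) % 2 = 0 then
          -a ⟨(j : ℕ) + 1, by have := j.isLt; omega⟩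
        else
          a ⟨(j : ℕ) - 1, by have := j.isLt; omega⟩))ᵀ
      = (1 : Matrix (Fin 2) (Fin 2) R) := by
  have key : ∀ F : Fin (2 * m) → R,
      ∑ k, F k = ∑ i ∈ Finset.range m,
        ((if h : 2 * i < 2 * m then F ⟨2 * i, h⟩ else 0) +
         (if h : 2 * i + 1 < 2 * m then F ⟨2 * i + 1, h⟩ else 0)) := by
    intro F
    rw [sum_fin_to_range, sum_range_pair]
  ext i j
  fin_cases i <;> fin_cases j <;>
    simp only [Matrix.mul_apply, Matrix.transpose_apply, Matrix.of_apply, Matrix.one_apply,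
      Fin.mk.injEq, Fin.ext_iff, Fin.val_zero, Fin.val_one] <;>
    norm_num
  · exact hab
  · rw [key]
    refine Finset.sum_eq_zero fun i hi => ?_
    have hi' := Finset.mem_range.mp hi
    have h1 : 2 * i < 2 * m := by omega
    have h2 : 2 * i + 1 < 2 * m := by omega
    simp only [dif_pos h1, dif_pos h2, Nat.mul_mod_right, Nat.mul_add_mod, Nat.add_sub_cancel,
      dite_true, dite_false, Nat.one_mod, one_ne_zero, reduceDIte]
    ring
  · rw [key]
    refine Finset.sum_eq_zero fun i hi => ?_
    have hi' := Finset.mem_range.mp hi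
    have h1 : 2 * i < 2 * m := by omega
    have h2 : 2 * i + 1 < 2 * m := by omega
    simp only [dif_pos h1, dif_pos h2, Nat.mul_mod_right, Nat.mul_add_mod, Nat.add_sub_cancel,
      dite_true, dite_false, Nat.one_mod, one_ne_zero, reduceDIte]
    ring
  · rw [key, ← hab, key (fun k => a k * b k)]
    refine Finset.sum_congr rfl fun i hi => ?_
    have hi' := Finset.mem_range.mp hi
    have h1 : 2 * i < 2 * m := by omega
    have h2 : 2 * i + 1 < 2 * m := by omega
    simp only [dif_pos h1, dif_pos h2, Nat.mul_mod_right, Nat.mul_add_mod, Nat.add_sub_cancel,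
      dite_true, dite_false, Nat.one_mod, one_ne_zero, reduceDIte]
    ring
end

section
/- Let R be a commutative ring, let n be an even positive integer, and let P be an R-module admitting an R-linear isomorphism P ⊕ R ≅ R^n. Then there exists an R-module Q and an R-linear isomorphism P ≅ Q ⊕ R. -/
/-!
Write `π : R^n → R` for the projection `P × R → R` transported along the isomorphism. For even
`n = 2m`, the standard symplectic form `ω` on `R^(m ⊕ m)` identifies `R^n` with its dual, so
`π = ω(b, ·)` for some `b`. Since `ω` is alternating, `π b = ω(b, b) = 0`, so `b` comes from
some `p ∈ P`; and the functional `ω(·, a)` with `π a = 1` takes the value `ω(b, a) = π a = 1`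
on `p`. A functional taking the value `1` splits off a copy of `R`.
-/

open Finset

theorem LinearMap.nonempty_equiv_ker_prod_of_apply_eq_one {R P : Type*} [CommRing R]
    [AddCommGroup P] [Module R P] (g : P →ₗ[R] R) {p : P} (hp : g p = 1) :
    Nonempty (P ≃ₗ[R] (LinearMap.ker g × R)) :=
  ⟨((LinearMap.exact_subtype_ker_map g).splitSurjectiveEquiv (Submodule.injective_subtype _)
    ⟨LinearMap.toSpanSingleton R P p, LinearMap.ext_ring (by simp [hp])⟩).1⟩

section Symplectic

variable (R : Type*) [CommRing R] (l : Type*) [Fintype l]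

def standardSymplecticForm : (l ⊕ l → R) →ₗ[R] (l ⊕ l → R) →ₗ[R] R :=
  LinearMap.mk₂ R (fun x y => ∑ i, (x (.inl i) * y (.inr i) - x (.inr i) * y (.inl i)))
    (fun x x' y => by simp only [Pi.add_apply, ← sum_add_distrib]; congr! 1; ring)
    (fun c x y => by simp only [Pi.smul_apply, smul_eq_mul, mul_sum]; congr! 1; ring)
    (fun x y y' => by simp only [Pi.add_apply, ← sum_add_distrib]; congr! 1; ring)
    (fun c x y => by simp only [Pi.smul_apply, smul_eq_mul, mul_sum]; congr! 1; ring)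

variable {R l}

theorem standardSymplecticForm_apply (x y : l ⊕ l → R) :
    standardSymplecticForm R l x y = ∑ i, (x (.inl i) * y (.inr i) - x (.inr i) * y (.inl i)) :=
  rfl

theorem standardSymplecticForm_self (x : l ⊕ l → R) : standardSymplecticForm R l x x = 0 := by
  simp [standardSymplecticForm_apply, mul_comm]

theorem standardSymplecticForm_surjective :
    Function.Surjective (standardSymplecticForm R l) := by
  intro φ
  classical
  refine ⟨Sum.elim (fun i => φ (Pi.single (.inr i) 1)) (fun i => -φ (Pi.single (.inl i) 1)), ?_⟩
  refine LinearMap.ext fun y => ?_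
  rw [standardSymplecticForm_apply]
  conv_rhs => rw [pi_eq_sum_univ' y, map_sum, Fintype.sum_sum_type, ← sum_add_distrib]
  refine sum_congr rfl fun i _ => ?_
  simp only [Sum.elim_inl, Sum.elim_inr, map_smul, smul_eq_mul]
  ring

end Symplectic

theorem exists_apply_eq_one_of_prod_equiv_of_alternating {R P M : Type*} [CommRing R]
    [AddCommGroup P] [Module R P] [AddCommGroup M] [Module R M]
    (ω : M →ₗ[R] M →ₗ[R] R) (hω : ∀ x, ω x x = 0) (hω_surj : Function.Surjective ω)
    (e : (P × R) ≃ₗ[R] M) : ∃ (g : P →ₗ[R] R) (p : P), g p = 1 := by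
  obtain ⟨b, hb⟩ := hω_surj (LinearMap.snd R P R ∘ₗ e.symm.toLinearMap)
  have hb_snd : (e.symm b).2 = 0 := by simpa using (LinearMap.congr_fun hb b).symm.trans (hω b)
  have hb_fst : e ((e.symm b).1, 0) = b := by rw [← hb_snd, e.apply_symm_apply]
  refine ⟨ω.flip (e (0, 1)) ∘ₗ e.toLinearMap ∘ₗ LinearMap.inl R P R, (e.symm b).1, ?_⟩
  simpa [hb_fst] using LinearMap.congr_fun hb (e (0, 1))

theorem stablyFree_even_free_summand_rank_one_general
    (R : Type u) [CommRing R] (n : ℕ) (heven : Even n)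
    (P : Type v) [AddCommGroup P] [Module R P]
    (h : Nonempty ((P × R) ≃ₗ[R] (Fin n → R))) :
    ∃ (Q : Type v) (_ : AddCommGroup Q) (_ : Module R Q),
      Nonempty (P ≃ₗ[R] (Q × R)) := by
  obtain ⟨m, rfl⟩ := heven
  obtain ⟨e⟩ := h
  obtain ⟨g, p, hp⟩ := exists_apply_eq_one_of_prod_equiv_of_alternating
    (standardSymplecticForm R (Fin m)) standardSymplecticForm_self
    standardSymplecticForm_surjective (e.trans (LinearEquiv.funCongrLeft R R finSumFinEquiv))
  exact ⟨LinearMap.ker g, inferInstance, inferInstance,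
    g.nonempty_equiv_ker_prod_of_apply_eq_one hp⟩

/-- Let `R` be a commutative ring, let `n` be an even positive integer, and let
`P` be an `R`-module admitting an `R`-linear isomorphism `P ⊕ R ≅ R^n`. Then there exists an
`R`-module `Q` and an `R`-linear isomorphism `P ≅ Q ⊕ R`. -/
theorem stablyFree_even_free_summand_rank_one
    (R : Type u) [CommRing R] (n : ℕ) (hn : 0 < n) (heven : Even n)
    (P : Type v) [AddCommGroup P] [Module R P]
    (h : Nonempty ((P × R) ≃ₗ[R] (Fin n → R))) :
    ∃ (Q : Type v) (_ : AddCommGroup Q) (_ : Module R Q),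
      Nonempty (P ≃ₗ[R] (Q × R)) :=
  stablyFree_even_free_summand_rank_one_general R n heven P h
end

section
/- Let R be a commutative ring, let r ≤ n be natural numbers, let P be an R-module, and let f : P ⊕ R^r ≅ R^n be an R-linear isomorphism. Then there exist r × n matrices A and B over R with A · Bᵀ = I_r such that P is R-linearly isomorphic to the kernel of the R-linear map R^n → R^r given by x ↦ A·x. -/
open Matrix

/-- Let `R` be a commutative ring, `r ≤ n` natural numbers, `P` an `R`-module,
and `f : P ⊕ R^r ≅ R^n` an `R`-linear isomorphism. Then there exist `r × n` matrices `A` and `B`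
over `R` with `A * Bᵀ = 1` such that `P` is `R`-linearly isomorphic to the kernel of the
`R`-linear map `R^n → R^r` induced by `A`. -/
theorem exists_matrix_section_of_stablyFree
    (R : Type u) [CommRing R] (r n : ℕ) (hrn : r ≤ n)
    (P : Type v) [AddCommGroup P] [Module R P]
    (f : (P × (Fin r → R)) ≃ₗ[R] (Fin n → R)) :
    ∃ A B : Matrix (Fin r) (Fin n) R, A * Bᵀ = 1 ∧
      Nonempty (P ≃ₗ[R] ↥(LinearMap.ker A.mulVecLin)) := by
  set g : (Fin n → R) →ₗ[R] (Fin r → R) :=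
    (LinearMap.snd R P (Fin r → R)).comp f.symm.toLinearMap with hg
  set h : (Fin r → R) →ₗ[R] (Fin n → R) :=
    f.toLinearMap.comp (LinearMap.inr R P (Fin r → R)) with hh
  have hmul : (LinearMap.toMatrix' g).mulVecLin = g := Matrix.toLin'_toMatrix' g
  refine ⟨LinearMap.toMatrix' g, (LinearMap.toMatrix' h)ᵀ, ?_, ?_⟩
  · rw [transpose_transpose, ← LinearMap.toMatrix'_comp]
    have hid : g.comp h = LinearMap.id := by
      ext x i
      simp [hg, hh]
    rw [hid, LinearMap.toMatrix'_id]
  · rw [hmul]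
    refine ⟨{ toFun := fun x => ⟨f (x, 0), by simp [hg]⟩
              map_add' := fun x y => by
                ext i
                simp [← f.map_add, Prod.mk_add_mk]
              map_smul' := fun c x => by
                ext i
                simp [← f.map_smul, Prod.smul_mk]
              invFun := fun y => (f.symm y.1).1
              left_inv := fun x => by simp
              right_inv := fun y => by
                have hsnd : (f.symm y.1).2 = 0 := y.2
                ext i
                have : ((f.symm y.1).1, (0 : Fin r → R)) = f.symm y.1 := by
                  rw [← hsnd]
                simp only [this, f.apply_symm_apply] }⟩
end
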